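/- arXiv:1110.0259 — 2 statements merged into one kernel-verified Lean document; each statement's English description precedes it below -/
import Mathlib

section
/- Let G be a directed graph with disjoint nonempty vertex sets X, Y admitting at least one X–Y separator. Among minimum-size X–Y separators there is a unique separator S* such that the set of vertices reachable from X in G \ S* is inclusion-wise maximal: for every minimum X–Y separator S, R⁺(X, G\S) ⊆ R⁺(X, G\S*). -/
/-!
Write `∂R` for the set of vertices outside `R` entered by an edge from `R`. A minimum separator
`S` equals `∂ R⁺(X, G \ S)`, so it is determined by its reach. The map `R ↦ |∂R|` is
submodular, so for minimum separators `S`, `T` with reaches `A`, `B` both `∂(A ∪ B)` and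
`∂(A ∩ B)` are separators whose sizes add up to at most `|S| + |T|`; hence `∂(A ∪ B)` is again
minimum, and its reach contains `A ∪ B`. Taking for `S*` a minimum separator whose reach `B` has
largest cardinality, this forces `A ∪ B = B` for every minimum `S`, i.e. `A ⊆ B`.
-/

variable {V : Type*}

/-- A single edge step in `G \ S`: an edge of `E` with both endpoints outside `S`. -/
def DStep (E : V → V → Prop) (S : Set V) (a b : V) : Prop :=
  E a b ∧ a ∉ S ∧ b ∉ S

/-- `b` is reachable from `a` by a directed path in `G \ S`. -/
def DReach (E : V → V → Prop) (S : Set V) (a b : V) : Prop :=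
  Relation.ReflTransGen (DStep E S) a b

/-- The set of vertices reachable from the set `X` in `G \ S`. -/
def RSet (E : V → V → Prop) (S X : Set V) : Set V :=
  {v | ∃ x ∈ X, DReach E S x v}

/-- `S` is an `X`–`Y` separator: disjoint from `X ∪ Y` and destroying all `X → Y` paths. -/
def IsSep (E : V → V → Prop) (X Y S : Set V) : Prop :=
  S ∩ (X ∪ Y) = ∅ ∧ ∀ x ∈ X, ∀ y ∈ Y, ¬ DReach E S x y

/-- `S` is an inclusion-wise minimal `X`–`Y` separator. -/
def IsMinSep (E : V → V → Prop) (X Y S : Set V) : Prop :=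
  IsSep E X Y S ∧ ∀ S', S' ⊂ S → ¬ IsSep E X Y S'

/-- `S` is an important `X`–`Y` separator: a minimal separator such that no separator of at
most the same size has a strictly larger set of vertices reachable from `X`. -/
def IsImpSep (E : V → V → Prop) (X Y S : Set V) : Prop :=
  IsMinSep E X Y S ∧
    ¬ ∃ S', IsSep E X Y S' ∧ S'.ncard ≤ S.ncard ∧ RSet E S X ⊂ RSet E S' X

/-- `S` is a (vertex) multiway cut of `(G, T)`. -/
def IsMWC (E : V → V → Prop) (T S : Set V) : Prop :=
  S ∩ T = ∅ ∧ ∀ t₁ ∈ T, ∀ t₂ ∈ T, t₁ ≠ t₂ → ¬ DReach E S t₁ t₂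

/-- The forward shadow of `S` with respect to `T`: vertices outside `S ∪ T` not reachable
from `T` in `G \ S`. -/
def fShadow (E : V → V → Prop) (T S : Set V) : Set V :=
  {v | v ∉ S ∧ v ∉ T ∧ ∀ t ∈ T, ¬ DReach E S t v}

/-- The reverse shadow of `S` with respect to `T`: vertices outside `S ∪ T` that cannot
reach `T` in `G \ S`. -/
def rShadow (E : V → V → Prop) (T S : Set V) : Set V :=
  {v | v ∉ S ∧ v ∉ T ∧ ∀ t ∈ T, ¬ DReach E S v t}

/-- The adjacency of `torso(G, C)`: an edge `(a, b)` whenever `a, b ∈ C` and `G` has a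
directed `a → b` path whose internal vertices all lie outside `C`. -/
def TorsoAdj (E : V → V → Prop) (C : Set V) (a b : V) : Prop :=
  a ∈ C ∧ b ∈ C ∧ ∃ w, E a w ∧ Relation.ReflTransGen (fun x y => x ∉ C ∧ E x y) w b

variable {E : V → V → Prop} {X Y S T R : Set V}

def outBoundary (E : V → V → Prop) (R : Set V) : Set V :=
  {v | v ∉ R ∧ ∃ u ∈ R, E u v}

def IsMinimumSep (E : V → V → Prop) (X Y S : Set V) : Prop :=
  IsSep E X Y S ∧ ∀ S', IsSep E X Y S' → S.ncard ≤ S'.ncard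

lemma disjoint_outBoundary_self : Disjoint (outBoundary E R) R :=
  Set.disjoint_left.2 fun _ hv => hv.1

lemma outBoundary_union_subset (A B : Set V) :
    outBoundary E (A ∪ B) ⊆ outBoundary E A ∪ outBoundary E B := by
  rintro v ⟨hv, u, hu | hu, he⟩
  · exact Or.inl ⟨fun h => hv (Or.inl h), u, hu, he⟩
  · exact Or.inr ⟨fun h => hv (Or.inr h), u, hu, he⟩

lemma outBoundary_inter_subset (A B : Set V) :
    outBoundary E (A ∩ B) ⊆ outBoundary E A ∪ outBoundary E B := by
  rintro v ⟨hv, u, hu, he⟩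
  by_cases hvA : v ∈ A
  · exact Or.inr ⟨fun h => hv ⟨hvA, h⟩, u, hu.2, he⟩
  · exact Or.inl ⟨hvA, u, hu.1, he⟩

lemma outBoundary_union_inter_outBoundary_inter_subset (A B : Set V) :
    outBoundary E (A ∪ B) ∩ outBoundary E (A ∩ B) ⊆ outBoundary E A ∩ outBoundary E B := by
  rintro v ⟨⟨hv, _⟩, -, u, hu, he⟩
  exact ⟨⟨fun h => hv (Or.inl h), u, hu.1, he⟩, ⟨fun h => hv (Or.inr h), u, hu.2, he⟩⟩

lemma ncard_outBoundary_union_add_ncard_outBoundary_inter_le [Finite V] (A B : Set V) :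
    (outBoundary E (A ∪ B)).ncard + (outBoundary E (A ∩ B)).ncard ≤
      (outBoundary E A).ncard + (outBoundary E B).ncard := by
  rw [← Set.ncard_union_add_ncard_inter, ← Set.ncard_union_add_ncard_inter (outBoundary E A)]
  exact add_le_add
    (Set.ncard_le_ncard (Set.union_subset (outBoundary_union_subset A B)
      (outBoundary_inter_subset A B)))
    (Set.ncard_le_ncard (outBoundary_union_inter_outBoundary_inter_subset A B))

lemma subset_RSet : X ⊆ RSet E S X :=
  fun x hx => ⟨x, hx, .refl⟩

lemma disjoint_RSet_of_disjoint (hSX : Disjoint S X) : Disjoint (RSet E S X) S := by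
  refine Set.disjoint_left.2 ?_
  rintro v ⟨x, hx, hr⟩
  rcases hr.cases_tail with rfl | ⟨_, -, -, -, hvS⟩
  exacts [Set.disjoint_right.1 hSX hx, hvS]

lemma RSet_subset_RSet_of_disjoint (h : Disjoint (RSet E S X) T) :
    RSet E S X ⊆ RSet E T X := by
  rintro v ⟨x, hx, hr⟩
  refine ⟨x, hx, ?_⟩
  induction hr with
  | refl => exact .refl
  | @tail b c hxb step ih =>
    exact ih.tail ⟨step.1, Set.disjoint_left.1 h ⟨x, hx, hxb⟩,
      Set.disjoint_left.1 h ⟨x, hx, hxb.tail step⟩⟩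

lemma RSet_outBoundary_subset (hXR : X ⊆ R) : RSet E (outBoundary E R) X ⊆ R := by
  rintro v ⟨x, hx, hr⟩
  induction hr with
  | refl => exact hXR hx
  | tail _ step ih => exact by_contra fun hc => step.2.2 ⟨hc, _, ih, step.1⟩

lemma outBoundary_RSet_subset (hSX : Disjoint S X) : outBoundary E (RSet E S X) ⊆ S := by
  rintro v ⟨hv, u, ⟨x, hx, hr⟩, he⟩
  by_contra hvS
  exact hv ⟨x, hx, hr.tail
    ⟨he, Set.disjoint_left.1 (disjoint_RSet_of_disjoint hSX) ⟨x, hx, hr⟩, hvS⟩⟩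

namespace IsSep

lemma disjoint_left (h : IsSep E X Y S) : Disjoint S X :=
  (Set.disjoint_iff_inter_eq_empty.2 h.1).mono_right Set.subset_union_left

lemma disjoint_right (h : IsSep E X Y S) : Disjoint S Y :=
  (Set.disjoint_iff_inter_eq_empty.2 h.1).mono_right Set.subset_union_right

lemma disjoint_RSet (h : IsSep E X Y S) : Disjoint (RSet E S X) Y :=
  Set.disjoint_left.2 fun _ ⟨x, hx, hr⟩ hy => h.2 x hx _ hy hr

end IsSep

lemma isSep_outBoundary (hXR : X ⊆ R) (hRY : Disjoint R Y)
    (hBY : Disjoint (outBoundary E R) Y) : IsSep E X Y (outBoundary E R) := by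
  refine ⟨Set.disjoint_iff_inter_eq_empty.1 (Set.disjoint_union_right.2
    ⟨disjoint_outBoundary_self.mono_right hXR, hBY⟩), fun x hx y hy hr => ?_⟩
  exact Set.disjoint_left.1 hRY (RSet_outBoundary_subset hXR ⟨x, hx, hr⟩) hy

lemma isSep_outBoundary_of_subset (hS : IsSep E X Y S) (hT : IsSep E X Y T) (hXR : X ⊆ R)
    (hR : R ⊆ RSet E S X ∪ RSet E T X)
    (hBR : outBoundary E R ⊆ outBoundary E (RSet E S X) ∪ outBoundary E (RSet E T X)) :
    IsSep E X Y (outBoundary E R) := by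
  refine isSep_outBoundary hXR
    ((Set.disjoint_union_left.2 ⟨hS.disjoint_RSet, hT.disjoint_RSet⟩).mono_left hR) ?_
  refine (Set.disjoint_union_left.2 ⟨hS.disjoint_right, hT.disjoint_right⟩).mono_left
    (hBR.trans (Set.union_subset_union ?_ ?_))
  exacts [outBoundary_RSet_subset hS.disjoint_left, outBoundary_RSet_subset hT.disjoint_left]

namespace IsMinimumSep

lemma eq_outBoundary_RSet [Finite V] (hS : IsMinimumSep E X Y S) :
    S = outBoundary E (RSet E S X) := by
  have hsub := outBoundary_RSet_subset (E := E) hS.1.disjoint_left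
  have hsep : IsSep E X Y (outBoundary E (RSet E S X)) :=
    isSep_outBoundary subset_RSet hS.1.disjoint_RSet (hS.1.disjoint_right.mono_left hsub)
  exact (Set.eq_of_subset_of_ncard_le hsub (hS.2 _ hsep)).symm

lemma outBoundary_union [Finite V] (hS : IsMinimumSep E X Y S) (hT : IsMinimumSep E X Y T) :
    IsMinimumSep E X Y (outBoundary E (RSet E S X ∪ RSet E T X)) := by
  set A := RSet E S X
  set B := RSet E T X
  have hP : IsSep E X Y (outBoundary E (A ∪ B)) :=
    isSep_outBoundary_of_subset hS.1 hT.1 (subset_RSet.trans Set.subset_union_left) le_rfl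
      (outBoundary_union_subset A B)
  have hQ : IsSep E X Y (outBoundary E (A ∩ B)) :=
    isSep_outBoundary_of_subset hS.1 hT.1 (Set.subset_inter subset_RSet subset_RSet)
      (Set.inter_subset_left.trans Set.subset_union_left) (outBoundary_inter_subset A B)
  have hsubmod := ncard_outBoundary_union_add_ncard_outBoundary_inter_le (E := E) A B
  have hA : (outBoundary E A).ncard ≤ S.ncard :=
    Set.ncard_le_ncard (outBoundary_RSet_subset hS.1.disjoint_left)
  have hB : (outBoundary E B).ncard ≤ T.ncard :=
    Set.ncard_le_ncard (outBoundary_RSet_subset hT.1.disjoint_left)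
  have hSQ : S.ncard ≤ (outBoundary E (A ∩ B)).ncard := hS.2 _ hQ
  have hTS : T.ncard ≤ S.ncard := hT.2 S hS.1
  have hPS : (outBoundary E (A ∪ B)).ncard ≤ S.ncard := by omega
  exact ⟨hP, fun S' hS' => hPS.trans (hS.2 S' hS')⟩

lemma RSet_subset_of_forall_ncard_le [Finite V] (hS : IsMinimumSep E X Y S)
    (hT : IsMinimumSep E X Y T)
    (hmax : ∀ S', IsMinimumSep E X Y S' → (RSet E S' X).ncard ≤ (RSet E T X).ncard) :
    RSet E S X ⊆ RSet E T X := by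
  set P := outBoundary E (RSet E S X ∪ RSet E T X)
  have hreach : RSet E S X ∪ RSet E T X ⊆ RSet E P X :=
    Set.union_subset
      (RSet_subset_RSet_of_disjoint (disjoint_outBoundary_self.symm.mono_left
        Set.subset_union_left))
      (RSet_subset_RSet_of_disjoint (disjoint_outBoundary_self.symm.mono_left
        Set.subset_union_right))
  have hcard : (RSet E S X ∪ RSet E T X).ncard ≤ (RSet E T X).ncard :=
    (Set.ncard_le_ncard hreach).trans (hmax P (hS.outBoundary_union hT))
  exact Set.union_eq_right.1 (Set.eq_of_subset_of_ncard_le Set.subset_union_right hcard).symm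

end IsMinimumSep

lemma exists_isMinimumSep [Finite V] (hex : ∃ S, IsSep E X Y S) : ∃ S, IsMinimumSep E X Y S :=
  (Set.exists_min_image {S | IsSep E X Y S} Set.ncard (Set.toFinite _) hex).imp
    fun _ h => ⟨h.1, h.2⟩

theorem unique_min_separator_with_maximal_reach_general [Fintype V]
    (E : V → V → Prop) (X Y : Set V)
    (hex : ∃ S, IsSep E X Y S) :
    ∃! Sstar : Set V, IsSep E X Y Sstar ∧
      (∀ S, IsSep E X Y S → Sstar.ncard ≤ S.ncard) ∧
      (∀ S, IsSep E X Y S → S.ncard = Sstar.ncard → RSet E S X ⊆ RSet E Sstar X) := by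
  obtain ⟨Sstar, hstar, hmax⟩ := Set.exists_max_image {S | IsMinimumSep E X Y S}
    (fun S => (RSet E S X).ncard) (Set.toFinite _) (exists_isMinimumSep hex)
  have hlargest {S} (hS : IsMinimumSep E X Y S) : RSet E S X ⊆ RSet E Sstar X :=
    hS.RSet_subset_of_forall_ncard_le hstar hmax
  refine ⟨Sstar, ⟨hstar.1, hstar.2, fun S hS hcard => hlargest ⟨hS, hcard ▸ hstar.2⟩⟩, ?_⟩
  rintro S₁ ⟨hsep, hmin, hmax₁⟩
  have hS₁ : IsMinimumSep E X Y S₁ := ⟨hsep, hmin⟩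
  have hreach : RSet E S₁ X = RSet E Sstar X :=
    (hlargest hS₁).antisymm (hmax₁ Sstar hstar.1 (le_antisymm (hstar.2 S₁ hsep) (hmin _ hstar.1)))
  rw [hS₁.eq_outBoundary_RSet, hstar.eq_outBoundary_RSet, hreach]

/-- Among the minimum-size `X`–`Y` separators there is a unique one whose
set of vertices reachable from `X` is inclusion-wise maximal. -/
theorem unique_min_separator_with_maximal_reach [Fintype V]
    (E : V → V → Prop) (X Y : Set V)
    (hX : X.Nonempty) (hY : Y.Nonempty) (hXY : Disjoint X Y)
    (hex : ∃ S, IsSep E X Y S) :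
    ∃! Sstar : Set V, IsSep E X Y Sstar ∧
      (∀ S, IsSep E X Y S → Sstar.ncard ≤ S.ncard) ∧
      (∀ S, IsSep E X Y S → S.ncard = Sstar.ncard → RSet E S X ⊆ RSet E Sstar X) :=
  unique_min_separator_with_maximal_reach_general E X Y hex
end

section
/- Let S be an important X–Y separator in a directed graph G and suppose X' ⊃ X is such that S is also an X'–Y separator (with X' disjoint from Y and S). Then S is an important X'–Y separator. -/
variable {V : Type*}

/-! A path from `X` avoiding `S` stays inside `R⁺(X', G \ S) ⊆ R⁺(X', G \ S')`, which avoids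
`S'`; hence `R⁺(X, G \ S) ⊆ R⁺(X, G \ S')`. A strict inclusion contradicts the importance of `S`
for `X`. Equality forces `S ⊆ S'`: by minimality every `s ∈ S` has an in-neighbour in
`R⁺(X, G \ S) = R⁺(X, G \ S')`, so `s ∉ S'` would put `s` itself into `R⁺(X, G \ S)`. But
`S ⊆ S'` gives `R⁺(X', G \ S') ⊆ R⁺(X', G \ S)`, contradicting the assumed strict inclusion. -/

section Separators

variable {E : V → V → Prop}

theorem DReach.of_subset {S T : Set V} {a b : V} (hST : S ⊆ T) (h : DReach E T a b) :
    DReach E S a b :=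
  Relation.ReflTransGen.mono (fun _ _ hab => ⟨hab.1, fun h => hab.2.1 (hST h),
    fun h => hab.2.2 (hST h)⟩) _ _ h

theorem RSet_anti {S T X : Set V} (hST : S ⊆ T) : RSet E T X ⊆ RSet E S X :=
  fun _ ⟨x, hx, hr⟩ => ⟨x, hx, hr.of_subset hST⟩

theorem notMem_of_mem_RSet {S X : Set V} (h : Disjoint S X) {v : V} (hv : v ∈ RSet E S X) :
    v ∉ S := by
  obtain ⟨x, hx, hr⟩ := hv
  rcases hr.cases_tail with rfl | ⟨_, _, hstep⟩
  · exact h.notMem_of_mem_right hx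
  · exact hstep.2.2

theorem IsSep.disjoint_source {X Y S : Set V} (h : IsSep E X Y S) : Disjoint S X :=
  (Set.disjoint_iff_inter_eq_empty.mpr h.1).mono_right Set.subset_union_left

theorem IsSep.mono_source {X X' Y S : Set V} (hX : X ⊆ X') (h : IsSep E X' Y S) :
    IsSep E X Y S :=
  ⟨Set.eq_empty_of_subset_empty <| h.1 ▸
      Set.inter_subset_inter_right _ (Set.union_subset_union_left _ hX),
    fun x hx => h.2 x (hX hx)⟩

theorem IsMinSep.mono_source {X X' Y S : Set V} (hX : X ⊆ X') (hsep : IsSep E X' Y S)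
    (h : IsMinSep E X Y S) : IsMinSep E X' Y S :=
  ⟨hsep, fun T hT hTsep => h.2 T hT (hTsep.mono_source hX)⟩

theorem DReach.exists_edge_of_diff_singleton {S : Set V} {s x y : V}
    (hr : DReach E (S \ {s}) x y) (hx : x ∉ S) (hn : ¬ DReach E S x y) :
    ∃ u, DReach E S x u ∧ E u s := by
  induction hr using Relation.ReflTransGen.head_induction_on with
  | refl => exact absurd Relation.ReflTransGen.refl hn
  | @head a c hstep _ ih =>
    obtain ⟨hE, _, hc⟩ := hstep
    by_cases hcs : c = s
    · exact ⟨a, Relation.ReflTransGen.refl, hcs ▸ hE⟩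
    · have hac : DStep E S a c := ⟨hE, hx, fun h => hc ⟨h, hcs⟩⟩
      obtain ⟨u, hu, huE⟩ := ih hac.2.2 fun h => hn (.head hac h)
      exact ⟨u, .head hac hu, huE⟩

theorem IsMinSep.exists_pred_mem_RSet {X Y S : Set V} (h : IsMinSep E X Y S) {s : V}
    (hs : s ∈ S) : ∃ u ∈ RSet E S X, E u s := by
  have hnot : ¬ IsSep E X Y (S \ {s}) := h.2 _ (Set.sdiff_singleton_ssubset.mpr hs)
  have hdisj : (S \ {s}) ∩ (X ∪ Y) = ∅ :=
    Set.eq_empty_of_subset_empty <| h.1.1 ▸ Set.inter_subset_inter_left _ Set.sdiff_subset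
  obtain ⟨x, hx, y, hy, hr⟩ : ∃ x ∈ X, ∃ y ∈ Y, DReach E (S \ {s}) x y := by
    by_contra! hall
    exact hnot ⟨hdisj, hall⟩
  have hxS : x ∉ S := h.1.disjoint_source.notMem_of_mem_right hx
  obtain ⟨u, hu, huE⟩ := hr.exists_edge_of_diff_singleton hxS (h.1.2 x hx y hy)
  exact ⟨u, ⟨x, hx, hu⟩, huE⟩

theorem RSet_subset_RSet_of_subset_source {S S' X X' : Set V} (hX : X ⊆ X')
    (hS' : Disjoint S' X') (h : RSet E S X' ⊆ RSet E S' X') : RSet E S X ⊆ RSet E S' X := by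
  rintro v ⟨x, hx, hr⟩
  refine ⟨x, hx, ?_⟩
  induction hr with
  | refl => exact .refl
  | @tail b c hxb hbc ih =>
    have avoid : ∀ {w}, DReach E S x w → w ∉ S' := fun hw =>
      notMem_of_mem_RSet hS' (h ⟨x, hX hx, hw⟩)
    exact ih.tail ⟨hbc.1, avoid hxb, avoid (hxb.tail hbc)⟩

theorem IsMinSep.subset_of_RSet_eq {X Y S S' : Set V} (h : IsMinSep E X Y S)
    (hS' : Disjoint S' X) (heq : RSet E S X = RSet E S' X) : S ⊆ S' := by
  intro s hs
  by_contra hsS'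
  obtain ⟨u, hu, hus⟩ := h.exists_pred_mem_RSet hs
  rw [heq] at hu
  obtain ⟨x, hx, hxu⟩ := hu
  have huS' : u ∉ S' := notMem_of_mem_RSet hS' ⟨x, hx, hxu⟩
  have hsR : s ∈ RSet E S' X := ⟨x, hx, hxu.tail ⟨hus, huS', hsS'⟩⟩
  exact notMem_of_mem_RSet h.1.disjoint_source (heq ▸ hsR) hs

end Separators

/-- If `S` is an important `X`–`Y` separator and `X' ⊃ X` is such that `S`
is an `X'`–`Y` separator, then `S` is an important `X'`–`Y` separator. -/
theorem important_separator_push_source (E : V → V → Prop) (X X' Y S : Set V)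
    (hImp : IsImpSep E X Y S) (hXX' : X ⊂ X') (hsep : IsSep E X' Y S) :
    IsImpSep E X' Y S := by
  refine ⟨hImp.1.mono_source hXX'.subset hsep, ?_⟩
  rintro ⟨S', hS'sep, hcard, hlt⟩
  have hsub : RSet E S X ⊆ RSet E S' X :=
    RSet_subset_RSet_of_subset_source hXX'.subset hS'sep.disjoint_source hlt.subset
  rcases hsub.eq_or_ssubset with heq | hss
  · have hSS' : S ⊆ S' :=
      hImp.1.subset_of_RSet_eq (hS'sep.mono_source hXX'.subset).disjoint_source heq
    exact hlt.not_subset (RSet_anti hSS')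
  · exact hImp.2 ⟨S', hS'sep.mono_source hXX'.subset, hcard, hss⟩
end
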